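/- There is a universal constant C such that for all n ∈ ℕ with n ≥ 1 and all x ∈ ℝ³ lying outside the union of the open Euclidean balls B(p_{i,n}, D/n²) around the subdivision midpoints, the Riemann sum ∑_i (D/n)³/|x - p_{i,n}| differs from the integral ∫_{y∈[-D,D]³} 1/|x-y| dy by at most C·D²/n. -/

import Mathlib

open MeasureTheory

/-- The closed cube `[-D,D]³ ⊆ ℝ³`. -/
def cube (D : ℝ) : Set (EuclideanSpace ℝ (Fin 3)) :=
  {y | ∀ i, y i ∈ Set.Icc (-D) D}

/-- The midpoint `p_{i,n}` of the subdivision box of side `D/n` indexed by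
`v ∈ (Fin (2n))³` (corresponding to integer coordinates `−n ≤ i,j,k < n`). -/
noncomputable def midpt (D : ℝ) (n : ℕ) (v : Fin (2 * n) × Fin (2 * n) × Fin (2 * n)) :
    EuclideanSpace ℝ (Fin 3) :=
  (WithLp.equiv 2 (Fin 3 → ℝ)).symm
    ![(((v.1 : ℕ) : ℝ) - n + 1 / 2) * (D / n),
      (((v.2.1 : ℕ) : ℝ) - n + 1 / 2) * (D / n),
      (((v.2.2 : ℕ) : ℝ) - n + 1 / 2) * (D / n)]

/-!
Cut the cube into the `(2n)³` half-open boxes of side `h = D/n` centred at the midpoints `p`, so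
that the error is a sum over boxes of `h³/|x - p| - ∫_box |x - y|⁻¹`. On a box with
`|x - p| ≥ 2h` the integrand differs from `|x - p|⁻¹` by at most `(3/2) h |x - y|⁻²`, and
`∫_cube |x - y|⁻² ≤ (4π + 8) D`, so these boxes contribute `O(h D) = O(D²/n)`. The remaining
boxes lie in the ball `B(x, 3h)`, so by volume there are at most `36π` of them and their integrals
add up to at most `18π h²`; each of their Riemann terms is at most `h³ n² / D = D²/n` because
`|x - p| ≥ D/n²`.
-/

open Metric Set Module Real Function

theorem abs_inv_sub_inv_le {a b h : ℝ} (hh : 0 < h) (hab : |a - b| ≤ h) (ha : 2 * h ≤ a) :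
    |a⁻¹ - b⁻¹| ≤ 3 / 2 * h * (b ^ 2)⁻¹ := by
  obtain ⟨hba, hab'⟩ := abs_le.1 hab
  have hb : 0 < b := by linarith
  have ha0 : 0 < a := by linarith
  rw [inv_sub_inv ha0.ne' hb.ne', abs_div, abs_sub_comm, abs_of_pos (mul_pos ha0 hb),
    div_le_iff₀ (mul_pos ha0 hb)]
  calc |a - b| ≤ h := hab
    _ ≤ 3 / 2 * h * (b ^ 2)⁻¹ * (a * b) := by
      rw [show 3 / 2 * h * (b ^ 2)⁻¹ * (a * b) = h * (3 / 2 * a / b) by field_simp]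
      refine le_mul_of_one_le_right hh.le ?_
      rw [le_div_iff₀ hb]
      linarith

theorem abs_measureReal_div_sub_setIntegral_inv_norm_sub_le {X : Type*}
    [NormedAddCommGroup X] [MeasurableSpace X] {μ : Measure X} {B : Set X}
    (hBm : MeasurableSet B) (hB : μ B ≠ ⊤) {x p : X} {h : ℝ} (hh : 0 < h)
    (hBp : B ⊆ closedBall p h) (hxp : 2 * h ≤ ‖x - p‖)
    (hf₁ : IntegrableOn (fun y => ‖x - y‖⁻¹) B μ)
    (hf₂ : IntegrableOn (fun y => (‖x - y‖ ^ 2)⁻¹) B μ) :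
    |μ.real B / ‖x - p‖ - ∫ y in B, ‖x - y‖⁻¹ ∂μ| ≤
      3 / 2 * h * ∫ y in B, (‖x - y‖ ^ 2)⁻¹ ∂μ := by
  have hconst : IntegrableOn (fun _ => ‖x - p‖⁻¹) B μ := integrableOn_const hB
  have hpt : ∀ y ∈ B, |‖x - p‖⁻¹ - ‖x - y‖⁻¹| ≤ 3 / 2 * h * (‖x - y‖ ^ 2)⁻¹ := by
    refine fun y hy => abs_inv_sub_inv_le hh ?_ hxp
    calc |‖x - p‖ - ‖x - y‖| ≤ ‖(x - p) - (x - y)‖ := abs_norm_sub_norm_le _ _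
      _ = dist y p := by rw [dist_eq_norm]; congr 1; abel
      _ ≤ h := hBp hy
  calc |μ.real B / ‖x - p‖ - ∫ y in B, ‖x - y‖⁻¹ ∂μ|
      = |∫ y in B, (‖x - p‖⁻¹ - ‖x - y‖⁻¹) ∂μ| := by
        rw [integral_sub hconst hf₁, setIntegral_const, smul_eq_mul, div_eq_mul_inv]
    _ ≤ ∫ y in B, |‖x - p‖⁻¹ - ‖x - y‖⁻¹| ∂μ := abs_integral_le_integral_abs
    _ ≤ ∫ y in B, 3 / 2 * h * (‖x - y‖ ^ 2)⁻¹ ∂μ :=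
        setIntegral_mono_on (hconst.sub hf₁).abs (hf₂.const_mul _) hBm hpt
    _ = 3 / 2 * h * ∫ y in B, (‖x - y‖ ^ 2)⁻¹ ∂μ := integral_const_mul _ _

theorem sum_setIntegral_le_setIntegral {X ι : Type*} [MeasurableSpace X] {μ : Measure X}
    (s : Finset ι) {t : ι → Set X} (ht : ∀ i, MeasurableSet (t i)) (hd : Pairwise (Disjoint on t))
    {S : Set X} (htS : ∀ i ∈ s, t i ⊆ S) {f : X → ℝ} (hf₀ : 0 ≤ᵐ[μ.restrict S] f)
    (hf : IntegrableOn f S μ) :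
    ∑ i ∈ s, ∫ y in t i, f y ∂μ ≤ ∫ y in S, f y ∂μ := by
  rw [← integral_biUnion_finset s (fun i _ => ht i) (hd.set_pairwise _)
    fun i hi => hf.mono_set (htS i hi)]
  exact setIntegral_mono_set hf hf₀ (iUnion₂_subset htS).eventuallyLE

section InversePowers

variable {E : Type*} [NormedAddCommGroup E] [NormedSpace ℝ E] [FiniteDimensional ℝ E]
  [MeasurableSpace E] [BorelSpace E] (μ : Measure E) [μ.IsAddHaarMeasure] {k : ℕ}

theorem locallyIntegrable_inv_norm_sub_pow (hk : k < finrank ℝ E) (x : E) :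
    LocallyIntegrable (fun y => (‖x - y‖ ^ k)⁻¹) μ := by
  have h0 : LocallyIntegrable (fun z : E => (‖z‖ ^ k)⁻¹) μ := by
    refine locallyIntegrable_of_norm_le_rpow (by omega) (C := 1) (α := k) (by exact_mod_cast hk)
      (.of_forall fun z => ?_) (by fun_prop)
    rw [one_mul, Real.rpow_neg (norm_nonneg z), Real.rpow_natCast, norm_inv, norm_pow,
      norm_norm]
  rw [← (μ.measurePreserving_sub_left x).map_eq] at h0
  exact (locallyIntegrable_map_homeomorph (Homeomorph.subLeft x)).1 h0

theorem integrableOn_inv_norm_sub_pow (hk : k < finrank ℝ E) (x : E) {s : Set E}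
    (hs : Bornology.IsBounded s) : IntegrableOn (fun y => (‖x - y‖ ^ k)⁻¹) s μ :=
  ((locallyIntegrable_inv_norm_sub_pow μ hk x).integrableOn_isCompact
    hs.isCompact_closure).mono_set subset_closure

theorem setIntegral_closedBall_inv_norm_sub_pow (hk : k < finrank ℝ E) (x : E) {R : ℝ}
    (hR : 0 ≤ R) :
    ∫ y in closedBall x R, (‖x - y‖ ^ k)⁻¹ ∂μ =
      finrank ℝ E * μ.real (ball 0 1) * (R ^ (finrank ℝ E - k) / (finrank ℝ E - k : ℕ)) := by
  have : Nontrivial E := Module.nontrivial_of_finrank_pos (R := ℝ) (by omega)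
  have hpre : (x - ·) ⁻¹' closedBall (0 : E) R = closedBall x R := by
    ext y; simp [dist_eq_norm, norm_sub_rev]
  have hradial : (closedBall (0 : E) R).indicator (fun z => (‖z‖ ^ k)⁻¹) =
      fun z => (Iic R).indicator (fun r : ℝ => (r ^ k)⁻¹) ‖z‖ := by
    ext z; by_cases hz : ‖z‖ ≤ R <;> simp [indicator, hz]
  have hpow : ∀ t ∈ Ioi (0 : ℝ), t ^ (finrank ℝ E - 1) • (Iic R).indicator (fun r => (r ^ k)⁻¹) t
      = (Iic R).indicator (fun t => t ^ (finrank ℝ E - k - 1)) t := by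
    intro t (ht : 0 < t)
    by_cases htR : t ≤ R
    · simp only [indicator, mem_Iic, htR, if_true, smul_eq_mul]
      rw [← pow_sub₀ _ ht.ne' (by omega)]
      congr 1; omega
    · simp [indicator, htR]
  have hshift := (μ.measurePreserving_sub_left x).setIntegral_preimage_emb
    (MeasurableEquiv.subLeft x).measurableEmbedding (fun z => (‖z‖ ^ k)⁻¹) (closedBall 0 R)
  rw [hpre] at hshift
  rw [hshift, ← integral_indicator measurableSet_closedBall, hradial,
    integral_fun_norm_addHaar, setIntegral_congr_fun measurableSet_Ioi hpow,
    setIntegral_indicator measurableSet_Iic, Ioi_inter_Iic, ← intervalIntegral.integral_of_le hR,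
    integral_pow, nsmul_eq_mul, smul_eq_mul, Nat.sub_sub]
  have hd : finrank ℝ E - k = finrank ℝ E - (k + 1) + 1 := by omega
  rw [hd, Nat.cast_succ, zero_pow (Nat.succ_ne_zero _)]
  ring

theorem setIntegral_inv_norm_sub_pow_le (hk : k < finrank ℝ E) (x : E) {s : Set E}
    (hs : Bornology.IsBounded s) (hsm : MeasurableSet s) {r : ℝ} (hr : 0 < r) :
    ∫ y in s, (‖x - y‖ ^ k)⁻¹ ∂μ ≤
      ∫ y in closedBall x r, (‖x - y‖ ^ k)⁻¹ ∂μ + μ.real s / r ^ k := by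
  have hfs := integrableOn_inv_norm_sub_pow μ hk x hs
  have hsfin : μ (s \ closedBall x r) ≠ ⊤ := (hs.subset sdiff_subset).measure_lt_top.ne
  rw [← integral_inter_add_sdiff measurableSet_closedBall hfs]
  gcongr ?_ + ?_
  · exact setIntegral_mono_set (integrableOn_inv_norm_sub_pow μ hk x isBounded_closedBall)
      (.of_forall fun y => by positivity) inter_subset_right.eventuallyLE
  · calc ∫ y in s \ closedBall x r, (‖x - y‖ ^ k)⁻¹ ∂μ
        ≤ ∫ _ in s \ closedBall x r, (r ^ k)⁻¹ ∂μ := by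
          refine setIntegral_mono_on (hfs.mono_set sdiff_subset) (integrableOn_const hsfin)
            (hsm.diff measurableSet_closedBall) fun y hy => ?_
          have hry : r < ‖x - y‖ := by
            simpa [dist_eq_norm, norm_sub_rev] using hy.2
          gcongr
      _ = μ.real (s \ closedBall x r) / r ^ k := by
          rw [setIntegral_const, smul_eq_mul, div_eq_mul_inv]
      _ ≤ μ.real s / r ^ k := by
          gcongr
          · exact hs.measure_lt_top.ne
          · exact sdiff_subset

end InversePowers

namespace EuclideanSpace

theorem setOf_forall_mem_eq_preimage {ι : Type*} (s : ι → Set ℝ) :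
    {y : EuclideanSpace ℝ ι | ∀ i, y i ∈ s i} = WithLp.ofLp ⁻¹' univ.pi s := by
  ext y; simp

variable {ι : Type*} [Fintype ι]

theorem volume_setOf_forall_mem (s : ι → Set ℝ) (hs : ∀ i, MeasurableSet (s i)) :
    volume {y : EuclideanSpace ℝ ι | ∀ i, y i ∈ s i} = ∏ i, volume (s i) := by
  rw [setOf_forall_mem_eq_preimage, (PiLp.volume_preserving_ofLp ι).measure_preimage
    (MeasurableSet.univ_pi hs).nullMeasurableSet, volume_pi_pi]

theorem setOf_forall_mem_ae_eq {s t : ι → Set ℝ} (h : ∀ i, s i =ᵐ[volume] t i) :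
    {y : EuclideanSpace ℝ ι | ∀ i, y i ∈ s i} =ᵐ[volume] {y | ∀ i, y i ∈ t i} := by
  rw [setOf_forall_mem_eq_preimage, setOf_forall_mem_eq_preimage]
  exact (PiLp.volume_preserving_ofLp ι).quasiMeasurePreserving.preimage_ae_eq
    (Measure.ae_eq_set_pi fun i _ => h i)

theorem norm_le_sqrt_card_mul {z : EuclideanSpace ℝ ι} {r : ℝ} (hr : 0 ≤ r)
    (hz : ∀ i, |z i| ≤ r) : ‖z‖ ≤ √(Fintype.card ι) * r := by
  rw [EuclideanSpace.norm_eq, ← Real.sqrt_sq hr, ← Real.sqrt_mul (Nat.cast_nonneg _)]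
  refine Real.sqrt_le_sqrt ?_
  calc ∑ i, ‖z i‖ ^ 2 ≤ ∑ _i : ι, r ^ 2 := by
        gcongr with i
        exact (Real.norm_eq_abs _).trans_le (hz i)
    _ = Fintype.card ι * r ^ 2 := by simp

end EuclideanSpace

local notation "E3" => EuclideanSpace ℝ (Fin 3)

section Grid

variable {D : ℝ} {n : ℕ}

noncomputable def gridPoint (D : ℝ) (n m : ℕ) : ℝ := ((m : ℝ) - n + 1 / 2) * (D / n)

def gridCell (D : ℝ) (n m : ℕ) : Set ℝ :=
  Ico (((m : ℝ) - n) * (D / n)) (((m : ℝ) - n + 1) * (D / n))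

def gridIndex {N : ℕ} (v : Fin N × Fin N × Fin N) : Fin 3 → Fin N := ![v.1, v.2.1, v.2.2]

theorem gridIndex_injective {N : ℕ} : Injective (gridIndex (N := N)) := fun _ _ h =>
  Prod.ext (congrFun h 0) (Prod.ext (congrFun h 1) (congrFun h 2))

theorem midpt_apply (D : ℝ) (n : ℕ) (v : Fin (2 * n) × Fin (2 * n) × Fin (2 * n)) (i : Fin 3) :
    midpt D n v i = gridPoint D n (gridIndex v i) := by
  fin_cases i <;> simp [midpt, gridPoint, gridIndex]

theorem abs_sub_gridPoint_le {m : ℕ} {t : ℝ} (ht : t ∈ gridCell D n m) :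
    |t - gridPoint D n m| ≤ D / n / 2 := by
  obtain ⟨h₁, h₂⟩ := ht
  exact abs_le.2 ⟨by unfold gridPoint; linarith, by unfold gridPoint; linarith⟩

theorem measurableSet_gridCell (D : ℝ) (n m : ℕ) : MeasurableSet (gridCell D n m) :=
  measurableSet_Ico

theorem volume_gridCell (D : ℝ) (n m : ℕ) : volume (gridCell D n m) = ENNReal.ofReal (D / n) := by
  rw [gridCell, Real.volume_Ico]; ring_nf

theorem eq_of_mem_gridCell (hD : 0 < D) (hn : 0 < n) {m m' : ℕ} {t : ℝ}
    (ht : t ∈ gridCell D n m) (ht' : t ∈ gridCell D n m') : m = m' := by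
  have hh : 0 < D / n := by positivity
  have hlt : ∀ {a b : ℕ}, t ∈ gridCell D n a → t ∈ gridCell D n b → a < b + 1 := by
    intro a b ha hb
    have : ((a : ℝ) - n) * (D / n) < ((b : ℝ) - n + 1) * (D / n) := ha.1.trans_lt hb.2
    exact_mod_cast (by nlinarith : (a : ℝ) < b + 1)
  have := hlt ht ht'
  have := hlt ht' ht
  omega

theorem iUnion_gridCell (hD : 0 < D) (hn : 0 < n) :
    ⋃ m : Fin (2 * n), gridCell D n m = Ico (-D) D := by
  have hn' : (0 : ℝ) < n := by exact_mod_cast hn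
  have hh : 0 < D / n := by positivity
  have hD' : D = n * (D / n) := by field_simp
  apply Subset.antisymm
  · refine iUnion_subset fun m t ⟨h₁, h₂⟩ => ⟨?_, ?_⟩
    · nlinarith [(Nat.cast_nonneg m : (0 : ℝ) ≤ m)]
    · have : (m : ℝ) + 1 ≤ 2 * n := by exact_mod_cast m.isLt
      nlinarith
  · intro t ⟨h₁, h₂⟩
    have h₀ : 0 ≤ (t + D) / (D / n) := div_nonneg (by linarith) hh.le
    refine mem_iUnion.2 ⟨⟨⌊(t + D) / (D / n)⌋₊, ?_⟩, ?_, ?_⟩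
    · rw [Nat.floor_lt h₀, div_lt_iff₀ hh]; push_cast; linarith
    · have := (le_div_iff₀ hh).1 (Nat.floor_le h₀); linarith
    · have := (div_lt_iff₀ hh).1 (Nat.lt_floor_add_one ((t + D) / (D / n))); linarith

def gridBox (D : ℝ) (n : ℕ) (v : Fin (2 * n) × Fin (2 * n) × Fin (2 * n)) : Set E3 :=
  {y | ∀ i, y i ∈ gridCell D n (gridIndex v i)}

variable {v : Fin (2 * n) × Fin (2 * n) × Fin (2 * n)}

theorem measurableSet_gridBox : MeasurableSet (gridBox D n v) := by
  rw [gridBox, EuclideanSpace.setOf_forall_mem_eq_preimage]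
  exact (MeasurableSet.univ_pi fun _ => measurableSet_gridCell ..).preimage
    (WithLp.measurable_ofLp _ _)

theorem volume_gridBox_ne_top : volume (gridBox D n v) ≠ ⊤ := by
  rw [gridBox, EuclideanSpace.volume_setOf_forall_mem _ fun _ => measurableSet_gridCell ..]
  simp [volume_gridCell]

theorem measureReal_gridBox (hD : 0 ≤ D) : volume.real (gridBox D n v) = (D / n) ^ 3 := by
  rw [measureReal_def, gridBox,
    EuclideanSpace.volume_setOf_forall_mem _ fun _ => measurableSet_gridCell ..]
  simp [volume_gridCell, ENNReal.toReal_ofReal (by positivity : 0 ≤ D / n)]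

theorem gridBox_subset_closedBall (hD : 0 ≤ D) :
    gridBox D n v ⊆ closedBall (midpt D n v) (D / n) := by
  intro y hy
  have hcoord : ∀ i, |(y - midpt D n v) i| ≤ D / n / 2 := fun i => by
    simpa [midpt_apply] using abs_sub_gridPoint_le (hy i)
  have hsqrt : √(Fintype.card (Fin 3)) ≤ 2 := by
    rw [Fintype.card_fin, Real.sqrt_le_left] <;> norm_num
  rw [mem_closedBall, dist_eq_norm]
  calc ‖y - midpt D n v‖ ≤ √(Fintype.card (Fin 3)) * (D / n / 2) :=
        EuclideanSpace.norm_le_sqrt_card_mul (by positivity) hcoord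
    _ ≤ 2 * (D / n / 2) := by gcongr
    _ = D / n := by ring

theorem pairwise_disjoint_gridBox (hD : 0 < D) (hn : 0 < n) :
    Pairwise (Disjoint on gridBox D n) := by
  refine fun v w hvw => Set.disjoint_left.2 fun y hv hw => hvw (gridIndex_injective ?_)
  exact funext fun i => Fin.ext (eq_of_mem_gridCell hD hn (hv i) (hw i))

theorem iUnion_gridBox (hD : 0 < D) (hn : 0 < n) :
    ⋃ v, gridBox D n v = {y : E3 | ∀ i, y i ∈ Ico (-D) D} := by
  rw [← iUnion_gridCell hD hn]
  apply Subset.antisymm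
  · exact iUnion_subset fun v y hy i => mem_iUnion.2 ⟨_, hy i⟩
  · intro y hy
    choose m hm using fun i => mem_iUnion.1 (hy i)
    refine mem_iUnion.2 ⟨(m 0, m 1, m 2), fun i => ?_⟩
    fin_cases i <;> exact hm _

theorem iUnion_gridBox_ae_eq_cube (hD : 0 < D) (hn : 0 < n) :
    ⋃ v, gridBox D n v =ᵐ[volume] cube D := by
  rw [iUnion_gridBox hD hn]
  exact EuclideanSpace.setOf_forall_mem_ae_eq fun _ => Ico_ae_eq_Icc

theorem gridBox_subset_cube (hD : 0 < D) (hn : 0 < n) : gridBox D n v ⊆ cube D := fun _ hy i =>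
  Ico_subset_Icc_self (((iUnion_gridBox hD hn).subset (mem_iUnion_of_mem v hy)) i)

end Grid

section Cube

theorem measurableSet_cube (D : ℝ) : MeasurableSet (cube D) := by
  rw [cube, EuclideanSpace.setOf_forall_mem_eq_preimage]
  exact (MeasurableSet.univ_pi fun _ => measurableSet_Icc).preimage (WithLp.measurable_ofLp _ _)

theorem isBounded_cube {D : ℝ} (hD : 0 ≤ D) : Bornology.IsBounded (cube D) :=
  isBounded_iff_forall_norm_le.2 ⟨_, fun _ hy =>
    EuclideanSpace.norm_le_sqrt_card_mul hD fun i => abs_le.2 (hy i)⟩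

theorem measureReal_cube {D : ℝ} (hD : 0 ≤ D) : volume.real (cube D) = 8 * D ^ 3 := by
  rw [measureReal_def, cube,
    EuclideanSpace.volume_setOf_forall_mem _ fun _ => measurableSet_Icc]
  simp [Real.volume_Icc]
  rw [ENNReal.toReal_ofReal (by linarith)]
  ring

theorem setIntegral_cube_eq_sum_gridBox {D : ℝ} (hD : 0 < D) {n : ℕ} (hn : 0 < n) {f : E3 → ℝ}
    (hf : IntegrableOn f (cube D)) : ∫ y in cube D, f y = ∑ v, ∫ y in gridBox D n v, f y := by
  rw [← setIntegral_congr_set (iUnion_gridBox_ae_eq_cube hD hn), integral_iUnion_fintype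
    (fun _ => measurableSet_gridBox) (pairwise_disjoint_gridBox hD hn)
    fun v => hf.mono_set (gridBox_subset_cube hD hn)]

end Cube

theorem measureReal_ball_fin_three (x : E3) {r : ℝ} (hr : 0 ≤ r) :
    volume.real (ball x r) = π * 4 / 3 * r ^ 3 := by
  rw [measureReal_def, EuclideanSpace.volume_ball_fin_three, ENNReal.toReal_mul,
    ENNReal.toReal_pow, ENNReal.toReal_ofReal hr, ENNReal.toReal_ofReal (by positivity)]
  ring

theorem measureReal_closedBall_fin_three (x : E3) {r : ℝ} (hr : 0 ≤ r) :
    volume.real (closedBall x r) = π * 4 / 3 * r ^ 3 := by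
  rw [measureReal_def, Measure.addHaar_closedBall_eq_addHaar_ball, ← measureReal_def,
    measureReal_ball_fin_three x hr]

theorem setIntegral_closedBall_inv_norm_sub (x : E3) {R : ℝ} (hR : 0 ≤ R) :
    ∫ y in closedBall x R, ‖x - y‖⁻¹ = 2 * π * R ^ 2 := by
  have := setIntegral_closedBall_inv_norm_sub_pow volume (k := 1) (by simp) x hR
  simp only [pow_one, finrank_euclideanSpace_fin, measureReal_ball_fin_three 0 zero_le_one] at this
  rw [this]
  push_cast
  ring

theorem setIntegral_closedBall_inv_norm_sub_sq (x : E3) {R : ℝ} (hR : 0 ≤ R) :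
    ∫ y in closedBall x R, (‖x - y‖ ^ 2)⁻¹ = 4 * π * R := by
  have := setIntegral_closedBall_inv_norm_sub_pow volume (k := 2) (by simp) x hR
  simp only [finrank_euclideanSpace_fin, measureReal_ball_fin_three 0 zero_le_one] at this
  rw [this]
  push_cast
  ring

theorem integrableOn_inv_norm_sub (x : E3) {s : Set E3} (hs : Bornology.IsBounded s) :
    IntegrableOn (fun y => ‖x - y‖⁻¹) s := by
  simpa using integrableOn_inv_norm_sub_pow volume (k := 1) (by simp) x hs

theorem setIntegral_cube_inv_norm_sub_sq_le {D : ℝ} (hD : 0 < D) (x : E3) :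
    ∫ y in cube D, (‖x - y‖ ^ 2)⁻¹ ≤ (4 * π + 8) * D := by
  calc ∫ y in cube D, (‖x - y‖ ^ 2)⁻¹
      ≤ (∫ y in closedBall x D, (‖x - y‖ ^ 2)⁻¹) + volume.real (cube D) / D ^ 2 :=
        setIntegral_inv_norm_sub_pow_le volume (k := 2) (by simp) x (isBounded_cube hD.le)
          (measurableSet_cube D) hD
    _ = (4 * π + 8) * D := by
        rw [setIntegral_closedBall_inv_norm_sub_sq x hD.le, measureReal_cube hD.le]
        field_simp

section RiemannSum

variable {D : ℝ} {n : ℕ} (x : E3)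

theorem gridBox_subset_closedBall_of_near (hD : 0 ≤ D)
    {v : Fin (2 * n) × Fin (2 * n) × Fin (2 * n)} (hv : ‖x - midpt D n v‖ < 2 * (D / n)) :
    gridBox D n v ⊆ closedBall x (3 * (D / n)) := by
  intro y hy
  rw [mem_closedBall]
  calc dist y x ≤ dist y (midpt D n v) + dist (midpt D n v) x := dist_triangle _ _ _
    _ ≤ D / n + 2 * (D / n) := by
        gcongr
        · exact gridBox_subset_closedBall hD hy
        · rw [dist_comm, dist_eq_norm]; exact hv.le
    _ = 3 * (D / n) := by ring

theorem card_near_le (hD : 0 < D) (hn : 0 < n) :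
    ((Finset.univ.filter fun v => ‖x - midpt D n v‖ < 2 * (D / n)).card : ℝ) ≤ 36 * π := by
  set N := Finset.univ.filter fun v => ‖x - midpt D n v‖ < 2 * (D / n)
  have hvol : (N.card : ℝ) * (D / n) ^ 3 ≤ 36 * π * (D / n) ^ 3 :=
    calc (N.card : ℝ) * (D / n) ^ 3 = ∑ v ∈ N, volume.real (gridBox D n v) := by
          simp [measureReal_gridBox hD.le]
      _ = volume.real (⋃ v ∈ N, gridBox D n v) :=
          (measureReal_biUnion_finset ((pairwise_disjoint_gridBox hD hn).set_pairwise _)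
            (fun _ _ => measurableSet_gridBox) fun _ _ => volume_gridBox_ne_top).symm
      _ ≤ volume.real (closedBall x (3 * (D / n))) :=
          measureReal_mono (iUnion₂_subset fun v hv =>
            gridBox_subset_closedBall_of_near x hD.le (Finset.mem_filter.1 hv).2)
            measure_closedBall_lt_top.ne
      _ = 36 * π * (D / n) ^ 3 := by
          rw [measureReal_closedBall_fin_three x (by positivity)]
          ring
  exact le_of_mul_le_mul_right hvol (by positivity)

theorem sum_near_abs_sub_le (hD : 0 < D) (hn : 0 < n)
    (hx : ∀ v, D / n ^ 2 ≤ ‖x - midpt D n v‖) :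
    ∑ v with ‖x - midpt D n v‖ < 2 * (D / n),
        |(D / n) ^ 3 / ‖x - midpt D n v‖ - ∫ y in gridBox D n v, ‖x - y‖⁻¹|
      ≤ 36 * π * (D ^ 2 / n) + 18 * π * (D / n) ^ 2 := by
  set N := Finset.univ.filter fun v => ‖x - midpt D n v‖ < 2 * (D / n)
  have hriemann : ∀ v, (D / n) ^ 3 / ‖x - midpt D n v‖ ≤ D ^ 2 / n := fun v =>
    calc (D / n) ^ 3 / ‖x - midpt D n v‖ ≤ (D / n) ^ 3 / (D / n ^ 2) := by
          gcongr; exact hx v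
      _ = D ^ 2 / n := by field_simp
  calc ∑ v ∈ N, |(D / n) ^ 3 / ‖x - midpt D n v‖ - ∫ y in gridBox D n v, ‖x - y‖⁻¹|
      ≤ ∑ v ∈ N, ((D / n) ^ 3 / ‖x - midpt D n v‖ + ∫ y in gridBox D n v, ‖x - y‖⁻¹) := by
        gcongr with v
        refine (abs_sub _ _).trans_eq ?_
        rw [abs_of_nonneg (by positivity),
          abs_of_nonneg (setIntegral_nonneg measurableSet_gridBox fun _ _ => by positivity)]
    _ ≤ N.card * (D ^ 2 / n) + ∫ y in closedBall x (3 * (D / n)), ‖x - y‖⁻¹ := by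
        rw [Finset.sum_add_distrib]
        gcongr
        · rw [← nsmul_eq_mul]
          exact Finset.sum_le_card_nsmul _ _ _ fun v _ => hriemann v
        · exact sum_setIntegral_le_setIntegral N (fun _ => measurableSet_gridBox)
            (pairwise_disjoint_gridBox hD hn)
            (fun v hv => gridBox_subset_closedBall_of_near x hD.le (Finset.mem_filter.1 hv).2)
            (.of_forall fun _ => by positivity) (integrableOn_inv_norm_sub x isBounded_closedBall)
    _ ≤ 36 * π * (D ^ 2 / n) + 18 * π * (D / n) ^ 2 := by
        rw [setIntegral_closedBall_inv_norm_sub x (by positivity),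
          show 2 * π * (3 * (D / n)) ^ 2 = 18 * π * (D / n) ^ 2 by ring]
        gcongr
        exact card_near_le x hD hn

theorem sum_far_abs_sub_le (hD : 0 < D) (hn : 0 < n) :
    ∑ v with ¬‖x - midpt D n v‖ < 2 * (D / n),
        |(D / n) ^ 3 / ‖x - midpt D n v‖ - ∫ y in gridBox D n v, ‖x - y‖⁻¹|
      ≤ 3 / 2 * (D / n) * ((4 * π + 8) * D) := by
  have hh : 0 < D / n := by positivity
  have hbdd : ∀ v, Bornology.IsBounded (gridBox D n v) := fun _ =>
    isBounded_closedBall.subset (gridBox_subset_closedBall hD.le)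
  have hsq : IntegrableOn (fun y => (‖x - y‖ ^ 2)⁻¹) (cube D) :=
    integrableOn_inv_norm_sub_pow volume (by simp) x (isBounded_cube hD.le)
  calc _ ≤ ∑ v with ¬‖x - midpt D n v‖ < 2 * (D / n),
        3 / 2 * (D / n) * ∫ y in gridBox D n v, (‖x - y‖ ^ 2)⁻¹ := by
        gcongr with v hv
        rw [← measureReal_gridBox hD.le]
        exact abs_measureReal_div_sub_setIntegral_inv_norm_sub_le measurableSet_gridBox
          volume_gridBox_ne_top hh (gridBox_subset_closedBall hD.le)
          (not_lt.1 (Finset.mem_filter.1 hv).2) (integrableOn_inv_norm_sub x (hbdd v))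
          (hsq.mono_set (gridBox_subset_cube hD hn))
    _ ≤ 3 / 2 * (D / n) * ∫ y in cube D, (‖x - y‖ ^ 2)⁻¹ := by
        rw [← Finset.mul_sum]
        gcongr
        exact sum_setIntegral_le_setIntegral _ (fun _ => measurableSet_gridBox)
          (pairwise_disjoint_gridBox hD hn) (fun _ _ => gridBox_subset_cube hD hn)
          (.of_forall fun _ => by positivity) hsq
    _ ≤ 3 / 2 * (D / n) * ((4 * π + 8) * D) := by
        gcongr
        exact setIntegral_cube_inv_norm_sub_sq_le hD x

end RiemannSum

/-- There is a universal constant `C` such that for all `n ≥ 1` and all `x ∈ ℝ³`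
outside the union of the balls `B(p_{i,n}, D/n²)`, the Riemann sum
`∑_i (D/n)³/|x − p_{i,n}|` differs from `∫_{[-D,D]³} |x−y|⁻¹ dy` by at most `C D²/n`. -/
theorem stmt2 :
    ∃ C : ℝ, 0 < C ∧ ∀ D : ℝ, 0 < D → ∀ n : ℕ, 1 ≤ n →
      ∀ x : EuclideanSpace ℝ (Fin 3),
        (∀ v : Fin (2 * n) × Fin (2 * n) × Fin (2 * n),
          x ∉ Metric.ball (midpt D n v) (D / (n : ℝ) ^ 2)) →
        |(∑ v : Fin (2 * n) × Fin (2 * n) × Fin (2 * n),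
            (D / n) ^ 3 / ‖x - midpt D n v‖) - ∫ y in cube D, ‖x - y‖⁻¹|
          ≤ C * D ^ 2 / n := by
  refine ⟨60 * π + 12, by positivity, fun D hD n hn x hx => ?_⟩
  have hdist : ∀ v, D / n ^ 2 ≤ ‖x - midpt D n v‖ := fun v => by
    simpa [dist_eq_norm] using hx v
  have hn1 : (1 : ℝ) ≤ n := by exact_mod_cast hn
  rw [setIntegral_cube_eq_sum_gridBox hD hn (integrableOn_inv_norm_sub x (isBounded_cube hD.le)),
    ← Finset.sum_sub_distrib]
  calc _ ≤ _ := Finset.abs_sum_le_sum_abs _ _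
    _ = _ := (Finset.sum_filter_add_sum_filter_not _
          (fun v => ‖x - midpt D n v‖ < 2 * (D / n)) _).symm
    _ ≤ (36 * π * (D ^ 2 / n) + 18 * π * (D / n) ^ 2) + 3 / 2 * (D / n) * ((4 * π + 8) * D) :=
        add_le_add (sum_near_abs_sub_le x hD hn hdist) (sum_far_abs_sub_le x hD hn)
    _ ≤ (60 * π + 12) * D ^ 2 / n := by
        have hsq : (D / n) ^ 2 ≤ D ^ 2 / n := by
          rw [div_pow]
          exact div_le_div_of_nonneg_left (by positivity) (by positivity) (by nlinarith)
        calc _ ≤ 36 * π * (D ^ 2 / n) + 18 * π * (D ^ 2 / n)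
              + 3 / 2 * (D / n) * ((4 * π + 8) * D) := by gcongr
          _ = _ := by ring
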